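/- Let 𝒮 be a 1-nested compatible set pair system on X and let (S,H) ∈ 𝒮 with H ≠ ∅. Then there exists a unique finite sequence (q₀,q₁,…,q_m) of elements of 𝒮 with m ≥ 2 such that: q_j covers q_{j+1} in the partial order (𝒮,≤) for all 0 ≤ j < m; q_m = (H,∅); every q_j with 1 ≤ j ≤ m−1 has second component equal to H; q_i = (S,H) for some 1 ≤ i ≤ m−1; and the first element q₀ = (S₊,H₊) satisfies S ∪ H ⊆ S₊ and H₊ ≠ H. -/

import Mathlib

/-!
The elements of `𝒮` with second component `H` whose first component is nested with `S`
(`chainThrough 𝒮 S H`) form a chain: by (NC4) two first components over the same `H` are nested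
or disjoint, and (NC5) forbids two disjoint ones that are both nested with a third. Between
`(H, ∅)` and the maximum `c` of this chain, every element of `𝒮` already lies in the chain, so a
maximal chain of covers from `c` down to `(H, ∅)` stays in it and, the chain being totally
ordered, passes through `(S, H)`. Putting a cover `q₀` of `c` in front gives the path: by the
maximality of `c`, `q₀` contains `S ∪ H` and does not have second component `H`.

Conversely, all interior elements of a path are comparable with `(S, H)`, so they lie in the
chain; the element below the head must be `c`, because the head lies above the whole chain; the
head is then the only cover of `c` containing `H`; and a chain of covers inside a totally
ordered set is determined by its end points.
-/

open Set

variable {X : Type*}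

/-- A set pair on `X`: an ordered pair `(S,H)` of subsets of `X` with `S ≠ ∅` and `S ∩ H = ∅`. -/
def IsSetPair (p : Set X × Set X) : Prop :=
  p.1 ≠ ∅ ∧ p.1 ∩ p.2 = ∅

/-- A set pair system on `X`: a collection of set pairs on `X`. -/
def IsSPS (𝒮 : Set (Set X × Set X)) : Prop :=
  ∀ p ∈ 𝒮, IsSetPair p

/-- The strict relation `<` on set pairs: `(S₁,H₁) < (S₂,H₂)` iff they are distinct and
(a) `S₁ ∪ H₁ ⊆ S₂`, or (b) `S₁ ∪ H₁ ⊆ H₂`, or (c) `S₁ ⊊ S₂` and `H₁ = H₂ ≠ ∅`. -/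
def splt (p q : Set X × Set X) : Prop :=
  p ≠ q ∧ (p.1 ∪ p.2 ⊆ q.1 ∨ p.1 ∪ p.2 ⊆ q.2 ∨ (p.1 ⊂ q.1 ∧ p.2 = q.2 ∧ q.2 ≠ ∅))

/-- `(S₁,H₁) ≤ (S₂,H₂)` iff `(S₁,H₁) < (S₂,H₂)` or `(S₁,H₁) = (S₂,H₂)`. -/
def sple (p q : Set X × Set X) : Prop :=
  splt p q ∨ p = q

/-- Exactly one of four propositions holds. -/
def ExactlyOne4 (a b c d : Prop) : Prop :=
  (a ∧ ¬b ∧ ¬c ∧ ¬d) ∨ (¬a ∧ b ∧ ¬c ∧ ¬d) ∨ (¬a ∧ ¬b ∧ c ∧ ¬d) ∨ (¬a ∧ ¬b ∧ ¬c ∧ d)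

/-- Exactly one of three propositions holds. -/
def ExactlyOne3 (a b c : Prop) : Prop :=
  (a ∧ ¬b ∧ ¬c) ∨ (¬a ∧ b ∧ ¬c) ∨ (¬a ∧ ¬b ∧ c)

/-- A 1-nested compatible set pair system on `X`: a set pair system satisfying (NC1)–(NC5). -/
def OneNestedCompatible (𝒮 : Set (Set X × Set X)) : Prop :=
  IsSPS 𝒮 ∧
  -- (NC1)
  (((Set.univ : Set X), (∅ : Set X)) ∈ 𝒮) ∧
  -- (NC2)
  (∀ x : X, (({x} : Set X), (∅ : Set X)) ∈ 𝒮) ∧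
  -- (NC3)
  (∀ p ∈ 𝒮, p.2 ≠ ∅ → ((p.2, (∅ : Set X)) : Set X × Set X) ∈ 𝒮) ∧
  -- (NC4)
  (∀ p ∈ 𝒮, ∀ q ∈ 𝒮, p ≠ q →
    ExactlyOne4 (splt p q) (splt q p)
      ((p.1 ∪ p.2) ∩ (q.1 ∪ q.2) = ∅)
      (p.1 ∩ q.1 = ∅ ∧ p.2 = q.2 ∧ p.2 ≠ ∅)) ∧
  -- (NC5)
  (¬ ∃ p ∈ 𝒮, ∃ q ∈ 𝒮, ∃ r ∈ 𝒮,
    p.2 = q.2 ∧ q.2 = r.2 ∧ p.2 ≠ ∅ ∧ p.1 ∩ q.1 = ∅ ∧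
    (p.1 ∪ q.1 ⊆ r.1 ∨ (p.1 ∪ q.1) ∩ r.1 = ∅))

/-- `p` covers `q` in the partial order `(𝒮,≤)`: an arc from `p` to `q`
in the Hasse diagram `D(𝒮)`; `p` is a parent of `q`, and `q` is a child of `p`. -/
def SPCovers (𝒮 : Set (Set X × Set X)) (p q : Set X × Set X) : Prop :=
  p ∈ 𝒮 ∧ q ∈ 𝒮 ∧ splt q p ∧ ¬ ∃ r ∈ 𝒮, splt q r ∧ splt r p

/-- `L` is the directed path `P(S,H)` in `D(𝒮)` associated with `(S,H) ∈ 𝒮`, `H ≠ ∅`: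
a sequence `(q₀,…,q_m)` of elements of `𝒮` with `m ≥ 2` in which `q_j` covers `q_{j+1}`,
such that `q_m = (H,∅)`, every interior `q_j` (`1 ≤ j ≤ m-1`) has second component `H`,
`q_i = (S,H)` for some `1 ≤ i ≤ m-1`, and the first element `q₀ = (S₊,H₊)` satisfies
`S ∪ H ⊆ S₊` and `H₊ ≠ H`. -/
def IsSPPath (𝒮 : Set (Set X × Set X)) (S H : Set X) (L : List (Set X × Set X)) : Prop :=
  3 ≤ L.length ∧
  List.Chain' (fun a b => SPCovers 𝒮 a b) L ∧
  L.getLast? = some ((H, (∅ : Set X)) : Set X × Set X) ∧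
  (∀ i : ℕ, ∀ p : Set X × Set X, 1 ≤ i → i + 1 < L.length → L[i]? = some p → p.2 = H) ∧
  (∃ i : ℕ, 1 ≤ i ∧ i + 1 < L.length ∧ L[i]? = some ((S, H) : Set X × Set X)) ∧
  (∃ p : Set X × Set X, L.head? = some p ∧ S ∪ H ⊆ p.1 ∧ p.2 ≠ H)

/-- A directed path in the Hasse diagram `D(𝒮)`: a sequence of at least two elements of `𝒮`
in which each element covers the next. -/
def IsDirPath (𝒮 : Set (Set X × Set X)) (L : List (Set X × Set X)) : Prop :=
  2 ≤ L.length ∧ List.Chain' (fun a b => SPCovers 𝒮 a b) L ∧ ∀ p ∈ L, p ∈ 𝒮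

theorem List.Pairwise.rel_or_rel {α : Type*} {R : α → α → Prop} {l : List α}
    (hl : l.Pairwise R) {a b : α} (ha : a ∈ l) (hb : b ∈ l) (hne : a ≠ b) :
    R a b ∨ R b a := by
  have : Std.Symm fun a b => R a b ∨ R b a := ⟨fun _ _ => Or.symm⟩
  have hl' : l.Pairwise fun a b => R a b ∨ R b a := hl.imp Or.inl
  exact hl'.forall ha hb hne

theorem List.forall_mem_append_singleton {α : Type*} {s : Set α} {l : List α} (a : α)
    (hl : ∀ p ∈ l, p ∈ s) : ∀ p ∈ l ++ [a], p ∈ insert a s := by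
  intro p hp
  rcases List.mem_append.mp hp with hp | hp
  · exact Or.inr (hl p hp)
  · exact Or.inl (List.mem_singleton.mp hp)

section SetPairSystem

variable {𝒮 : Set (Set X × Set X)} {H : Set X} {p q r x y : Set X × Set X}

theorem IsSPS.fst_nonempty (hS : IsSPS 𝒮) (hp : p ∈ 𝒮) : p.1.Nonempty :=
  Set.nonempty_iff_ne_empty.mpr (hS p hp).1

theorem IsSPS.notMem_snd (hS : IsSPS 𝒮) (hp : p ∈ 𝒮) {a : X} (ha : a ∈ p.1) : a ∉ p.2 :=
  fun ha' => Set.eq_empty_iff_forall_notMem.mp (hS p hp).2 a ⟨ha, ha'⟩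

theorem splt_irrefl (p : Set X × Set X) : ¬ splt p p := fun h => h.1 rfl

theorem splt.union_subset (h : splt p q) : p.1 ∪ p.2 ⊆ q.1 ∪ q.2 := by
  obtain ⟨-, h | h | ⟨h1, h2, -⟩⟩ := h
  · exact h.trans Set.subset_union_left
  · exact h.trans Set.subset_union_right
  · exact Set.union_subset_union h1.subset h2.subset

theorem IsSPS.splt_asymm (hS : IsSPS 𝒮) (hp : p ∈ 𝒮) (hq : q ∈ 𝒮) (hpq : splt p q) :
    ¬ splt q p := by
  rintro ⟨-, hqp⟩
  obtain ⟨hne, hpq⟩ := hpq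
  obtain ⟨a, ha⟩ := hS.fst_nonempty hp
  obtain ⟨b, hb⟩ := hS.fst_nonempty hq
  rcases hpq with hpq | hpq | hpq <;> rcases hqp with hqp | hqp | hqp
  · have e1 : p.1 ⊆ q.1 := fun z hz => hpq (Or.inl hz)
    have e2 : q.1 ⊆ p.1 := fun z hz => hqp (Or.inl hz)
    have hp2 : p.2 = ∅ := Set.eq_empty_iff_forall_notMem.mpr
      fun z hz => hS.notMem_snd hp (e2 (hpq (Or.inr hz))) hz
    have hq2 : q.2 = ∅ := Set.eq_empty_iff_forall_notMem.mpr
      fun z hz => hS.notMem_snd hq (e1 (hqp (Or.inr hz))) hz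
    exact hne (Prod.ext (e1.antisymm e2) (hp2.trans hq2.symm))
  · exact hS.notMem_snd hp ha (hqp (Or.inl (hpq (Or.inl ha))))
  · exact hqp.1.not_subset fun z hz => hpq (Or.inl hz)
  · exact hS.notMem_snd hq hb (hpq (Or.inl (hqp (Or.inl hb))))
  · exact hS.notMem_snd hp ha (hqp (Or.inr (hpq (Or.inl ha))))
  · exact hS.notMem_snd hp ha (hqp.2.1 ▸ hpq (Or.inl ha))
  · exact hpq.1.not_subset fun z hz => hqp (Or.inl hz)
  · exact hS.notMem_snd hq hb (hpq.2.1 ▸ hqp (Or.inl hb))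
  · exact hpq.1.not_subset hqp.1.subset

theorem IsSPS.splt_trans (hS : IsSPS 𝒮) (hp : p ∈ 𝒮) (hq : q ∈ 𝒮) (hpq : splt p q)
    (hqr : splt q r) : splt p r := by
  refine ⟨?_, ?_⟩
  · rintro rfl
    exact hS.splt_asymm hp hq hpq hqr
  obtain ⟨-, h1 | h1 | ⟨h1, h1', -⟩⟩ := hpq <;>
    obtain ⟨-, h2 | h2 | ⟨h2, h2', h2''⟩⟩ := hqr
  · exact Or.inl (h1.trans (Set.subset_union_left.trans h2))
  · exact Or.inr (Or.inl (h1.trans (Set.subset_union_left.trans h2)))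
  · exact Or.inl (h1.trans h2.subset)
  · exact Or.inl (h1.trans (Set.subset_union_right.trans h2))
  · exact Or.inr (Or.inl (h1.trans (Set.subset_union_right.trans h2)))
  · exact Or.inr (Or.inl (h2' ▸ h1))
  · exact Or.inl ((Set.union_subset_union h1.subset h1'.subset).trans h2)
  · exact Or.inr (Or.inl ((Set.union_subset_union h1.subset h1'.subset).trans h2))
  · exact Or.inr (Or.inr ⟨h1.trans h2, h1'.trans h2', h2''⟩)

theorem splt_bot (hH : H.Nonempty) {b : Set X × Set X} (hb : b.2 = H) :
    splt (H, ∅) b :=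
  ⟨fun he => hH.ne_empty (hb ▸ (congrArg Prod.snd he).symm), Or.inr (Or.inl (by simp [hb]))⟩

theorem IsSPS.ssubset_union_of_splt_bot (hS : IsSPS 𝒮) (hr : r ∈ 𝒮) (h : splt (H, ∅) r) :
    H ⊂ r.1 ∪ r.2 := by
  obtain ⟨hne, hsub | hsub | ⟨-, h0, hr0⟩⟩ := h
  · simp only [Set.union_empty] at hsub
    refine ⟨hsub.trans Set.subset_union_left, fun hrH => hne ?_⟩
    have hr2 : r.2 = ∅ := Set.eq_empty_iff_forall_notMem.mpr
      fun a ha => hS.notMem_snd hr (hsub (hrH (Or.inr ha))) ha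
    exact Prod.ext (hsub.antisymm (Set.subset_union_left.trans hrH)) hr2.symm
  · simp only [Set.union_empty] at hsub
    obtain ⟨a, ha⟩ := hS.fst_nonempty hr
    exact ⟨hsub.trans Set.subset_union_right,
      fun hrH => hS.notMem_snd hr ha (hsub (hrH (Or.inl ha)))⟩
  · exact absurd h0.symm hr0

theorem IsSPS.snd_eq_and_ssubset_of_splt (hS : IsSPS 𝒮) (hH : H.Nonempty) (hq : q ∈ 𝒮)
    (hq2 : q.2 = H) (hr : H ⊂ r.1 ∪ r.2) (h : splt r q) : r.2 = H ∧ r.1 ⊂ q.1 := by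
  obtain ⟨-, hsub | hsub | ⟨hlt, h2, -⟩⟩ := h
  · obtain ⟨a, ha⟩ := hH
    exact absurd (hq2 ▸ ha) (hS.notMem_snd hq (hsub (hr.subset ha)))
  · exact absurd (hq2 ▸ hsub) hr.not_subset
  · exact ⟨h2.trans hq2, hlt⟩

theorem IsSPS.wellFounded_splt [Finite X] (hS : IsSPS 𝒮) :
    WellFounded fun p q => p ∈ 𝒮 ∧ q ∈ 𝒮 ∧ splt p q :=
  @Finite.wellFounded_of_trans_of_irrefl _ _ _
    ⟨fun _ _ _ h1 h2 => ⟨h1.1, h2.2.1, hS.splt_trans h1.1 h1.2.1 h1.2.2 h2.2.2⟩⟩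
    ⟨fun p h => splt_irrefl p h.2.2⟩

theorem IsSPS.wellFounded_splt_swap [Finite X] (hS : IsSPS 𝒮) :
    WellFounded fun p q => p ∈ 𝒮 ∧ q ∈ 𝒮 ∧ splt q p :=
  @Finite.wellFounded_of_trans_of_irrefl _ _ _
    ⟨fun _ _ _ h1 h2 => ⟨h1.1, h2.2.1, hS.splt_trans h2.2.1 h1.2.1 h2.2.2 h1.2.2⟩⟩
    ⟨fun p h => splt_irrefl p h.2.2⟩

theorem IsSPS.exists_spcovers [Finite X] (hS : IsSPS 𝒮) (hx : x ∈ 𝒮) (hy : y ∈ 𝒮)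
    (hyx : splt y x) : ∃ p, SPCovers 𝒮 p y := by
  obtain ⟨m, ⟨hm, hym⟩, hmin⟩ :=
    hS.wellFounded_splt.has_min {z | z ∈ 𝒮 ∧ splt y z} ⟨x, hx, hyx⟩
  exact ⟨m, hm, hy, hym, fun ⟨r, hr, hyr, hrm⟩ => hmin r ⟨hr, hyr⟩ ⟨hr, hm, hrm⟩⟩

theorem IsSPS.exists_isChain_spcovers [Finite X] (hS : IsSPS 𝒮) (hx : x ∈ 𝒮)
    (hy : y ∈ 𝒮) (hyx : splt y x) : ∃ l, (x :: l ++ [y]).IsChain (SPCovers 𝒮) := by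
  induction x using hS.wellFounded_splt.induction with
  | _ x ih =>
    obtain ⟨m, ⟨hm, hmx, hym⟩, hmax⟩ := hS.wellFounded_splt_swap.has_min
      {z | z ∈ 𝒮 ∧ splt z x ∧ (z = y ∨ splt y z)} ⟨y, hy, hyx, Or.inl rfl⟩
    have hcov : SPCovers 𝒮 x m := by
      refine ⟨hx, hm, hmx, fun ⟨r, hr, hmr, hrx⟩ =>
        hmax r ⟨hr, hrx, Or.inr ?_⟩ ⟨hr, hm, hmr⟩⟩
      rcases hym with rfl | hym
      exacts [hmr, hS.splt_trans hy hm hym hmr]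
    rcases hym with rfl | hym
    · exact ⟨[], List.isChain_pair.mpr hcov⟩
    · obtain ⟨l, hl⟩ := ih m ⟨hm, hx, hmx⟩ hm hym
      exact ⟨m :: l, hl.cons_cons hcov⟩

end SetPairSystem

section CoveringChains

variable {𝒮 D : Set (Set X × Set X)} {x y : Set X × Set X}

theorem IsSPS.pairwise_of_isChain_spcovers (hS : IsSPS 𝒮) {L : List (Set X × Set X)}
    (hL : L.IsChain (SPCovers 𝒮)) : L.Pairwise fun a b => a ∈ 𝒮 ∧ b ∈ 𝒮 ∧ splt b a := by
  let R : Set X × Set X → Set X × Set X → Prop := fun a b => a ∈ 𝒮 ∧ b ∈ 𝒮 ∧ splt b a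
  have : Trans R R R :=
    ⟨fun h1 h2 => ⟨h1.1, h2.2.1, hS.splt_trans h2.2.1 h1.2.1 h2.2.2 h1.2.2⟩⟩
  have hR : L.IsChain R := hL.imp fun _ _ h => ⟨h.1, h.2.1, h.2.2.1⟩
  exact hR.pairwise

theorem eq_of_spcovers_of_isChain (hD : IsChain splt D) {a b b' : Set X × Set X}
    (hb : b ∈ D) (hb' : b' ∈ D) (h : SPCovers 𝒮 a b) (h' : SPCovers 𝒮 a b') : b = b' := by
  by_contra hne
  rcases hD hb hb' hne with hbb' | hb'b
  · exact h.2.2.2 ⟨b', h'.2.1, hbb', h'.2.2.1⟩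
  · exact h'.2.2.2 ⟨b, h.2.1, hb'b, h.2.2.1⟩

theorem IsSPS.not_spcovers_of_isChain_spcovers (hS : IsSPS 𝒮) (hD : IsChain splt D)
    {b : Set X × Set X} {t : List (Set X × Set X)}
    (hl : (x :: b :: t ++ [y]).IsChain (SPCovers 𝒮)) (hb : b ∈ D) (hy : y ∈ D) :
    ¬ SPCovers 𝒮 x y := by
  intro hxy
  obtain ⟨hxb, hbt⟩ := List.isChain_cons_cons.mp hl
  obtain rfl : b = y := eq_of_spcovers_of_isChain hD hb hy hxb hxy
  exact splt_irrefl b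
    (List.rel_of_pairwise_cons (hS.pairwise_of_isChain_spcovers hbt) (by simp)).2.2

theorem IsSPS.eq_of_isChain_spcovers (hS : IsSPS 𝒮) (hD : IsChain splt D)
    {l₁ l₂ : List (Set X × Set X)} (h₁ : (x :: l₁ ++ [y]).IsChain (SPCovers 𝒮))
    (h₂ : (x :: l₂ ++ [y]).IsChain (SPCovers 𝒮))
    (hD₁ : ∀ p ∈ x :: l₁ ++ [y], p ∈ D) (hD₂ : ∀ p ∈ x :: l₂ ++ [y], p ∈ D) :
    l₁ = l₂ := by
  induction l₁ generalizing x l₂ with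
  | nil =>
    cases l₂ with
    | nil => rfl
    | cons b t =>
      exact (hS.not_spcovers_of_isChain_spcovers hD h₂ (hD₂ b (by simp)) (hD₂ y (by simp))
        (List.isChain_pair.mp h₁)).elim
  | cons b t ih =>
    cases l₂ with
    | nil =>
      exact (hS.not_spcovers_of_isChain_spcovers hD h₁ (hD₁ b (by simp)) (hD₁ y (by simp))
        (List.isChain_pair.mp h₂)).elim
    | cons b' t' =>
      obtain ⟨hxb, hb⟩ := List.isChain_cons_cons.mp h₁
      obtain ⟨hxb', hb'⟩ := List.isChain_cons_cons.mp h₂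
      obtain rfl : b = b' :=
        eq_of_spcovers_of_isChain hD (hD₁ b (by simp)) (hD₂ b' (by simp)) hxb hxb'
      rw [ih hb hb' (fun p hp => hD₁ p (List.mem_cons_of_mem x hp))
        (fun p hp => hD₂ p (List.mem_cons_of_mem x hp))]

theorem mem_of_isChain_spcovers (hD : IsChain splt D) {d : Set X × Set X} (hd : d ∈ 𝒮)
    (hdD : d ∈ D) {l : List (Set X × Set X)} (hl : (x :: l ++ [y]).IsChain (SPCovers 𝒮))
    (hlD : ∀ p ∈ x :: l ++ [y], p ∈ D) (hxd : ¬ splt x d) (hdy : ¬ splt d y) :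
    d ∈ x :: l ++ [y] := by
  induction l generalizing x with
  | nil =>
    by_contra hdL
    simp only [List.cons_append, List.nil_append, List.mem_cons, List.not_mem_nil, or_false,
      not_or] at hdL
    have hdx : splt d x := (hD hdD (hlD x (by simp)) hdL.1).resolve_right hxd
    have hyd : splt y d := (hD (hlD y (by simp)) hdD (Ne.symm hdL.2)).resolve_right hdy
    exact (List.isChain_pair.mp hl).2.2.2 ⟨d, hd, hyd, hdx⟩
  | cons b t ih =>
    obtain ⟨hxb, hbt⟩ := List.isChain_cons_cons.mp hl
    rcases eq_or_ne d x with rfl | hne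
    · exact List.mem_cons_self
    have hdx : splt d x := (hD hdD (hlD x (by simp)) hne).resolve_right hxd
    exact List.mem_cons_of_mem x <| ih hbt (fun p hp => hlD p (List.mem_cons_of_mem x hp))
      fun hbd => hxb.2.2.2 ⟨d, hd, hbd, hdx⟩

end CoveringChains

theorem isSPPath_iff {𝒮 : Set (Set X × Set X)} {S H : Set X} {L : List (Set X × Set X)} :
    IsSPPath 𝒮 S H L ↔ ∃ a l, L = a :: l ++ [(H, ∅)] ∧ L.IsChain (SPCovers 𝒮) ∧
      (∀ p ∈ l, p.2 = H) ∧ (S, H) ∈ l ∧ S ∪ H ⊆ a.1 ∧ a.2 ≠ H := by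
  constructor
  · rintro ⟨hlen, hch, hlast, hint, ⟨i, hi1, hi2, hi⟩, a, hhead, haSH, ha2⟩
    obtain ⟨L₀, z, rfl⟩ := (L.eq_nil_or_concat').resolve_left (by rintro rfl; simp at hlen)
    obtain rfl : z = (H, ∅) := by simpa using hlast
    obtain ⟨a', l, rfl⟩ : ∃ a' l, L₀ = a' :: l := by
      cases L₀ with
      | nil => simp at hlen
      | cons a' l => exact ⟨a', l, rfl⟩
    obtain rfl : a' = a := by simpa using hhead
    refine ⟨_, l, rfl, hch, fun p hp => ?_, ?_, haSH, ha2⟩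
    · obtain ⟨k, hk, rfl⟩ := List.getElem_of_mem hp
      exact hint (k + 1) _ (by omega) (by simp; omega)
        (by simp [List.getElem?_append_left hk])
    · obtain ⟨j, rfl⟩ : ∃ j, i = j + 1 := ⟨i - 1, by omega⟩
      simp only [List.length_append, List.length_cons, List.length_nil] at hi2
      rw [List.cons_append, List.getElem?_cons_succ, List.getElem?_append_left (by omega)] at hi
      exact List.mem_of_getElem? hi
  · rintro ⟨a, l, rfl, hch, hl, hSH, haSH, ha2⟩
    refine ⟨?_, hch, List.getLast?_concat .., fun i p hi1 hi2 hp => ?_, ?_, a, rfl, haSH, ha2⟩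
    · have := List.length_pos_of_mem hSH
      simp only [List.length_append, List.length_cons, List.length_nil]
      omega
    · obtain ⟨j, rfl⟩ : ∃ j, i = j + 1 := ⟨i - 1, by omega⟩
      simp only [List.length_append, List.length_cons, List.length_nil] at hi2
      rw [List.cons_append, List.getElem?_cons_succ, List.getElem?_append_left (by omega)] at hp
      exact hl p (List.mem_of_getElem? hp)
    · obtain ⟨j, hj, hjeq⟩ := List.getElem_of_mem hSH
      refine ⟨j + 1, by omega, by simp; omega, ?_⟩
      simp [List.getElem?_append_left hj, List.getElem?_eq_getElem hj, hjeq]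

def chainThrough (𝒮 : Set (Set X × Set X)) (S H : Set X) : Set (Set X × Set X) :=
  {p | p ∈ 𝒮 ∧ p.2 = H ∧ (p.1 ⊆ S ∨ S ⊆ p.1)}

theorem mem_chainThrough_self {𝒮 : Set (Set X × Set X)} {S H : Set X} (hmem : (S, H) ∈ 𝒮) :
    (S, H) ∈ chainThrough 𝒮 S H :=
  ⟨hmem, rfl, Or.inl subset_rfl⟩

namespace OneNestedCompatible

variable {𝒮 : Set (Set X × Set X)} {S H : Set X} {p q r c q₀ : Set X × Set X}
  {l : List (Set X × Set X)}

theorem splt_or_splt_or_disjoint (h : OneNestedCompatible 𝒮) (hp : p ∈ 𝒮) (hq : q ∈ 𝒮)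
    (hne : p ≠ q) :
    splt p q ∨ splt q p ∨ (p.1 ∪ p.2) ∩ (q.1 ∪ q.2) = ∅ ∨
      (p.1 ∩ q.1 = ∅ ∧ p.2 = q.2 ∧ p.2 ≠ ∅) := by
  have := h.2.2.2.2.1 p hp q hq hne
  unfold ExactlyOne4 at this
  tauto

theorem splt_iff_ssubset (h : OneNestedCompatible 𝒮) (hH : H.Nonempty) (hp : p ∈ 𝒮)
    (hq : q ∈ 𝒮) (hp2 : p.2 = H) (hq2 : q.2 = H) : splt p q ↔ p.1 ⊂ q.1 := by
  constructor
  · rintro ⟨-, hsub | hsub | ⟨hlt, -⟩⟩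
    · obtain ⟨a, ha⟩ := hH
      exact absurd (hq2 ▸ ha) (h.1.notMem_snd hq (hsub (Or.inr (hp2 ▸ ha))))
    · obtain ⟨b, hb⟩ := h.1.fst_nonempty hp
      exact absurd (hp2 ▸ hq2 ▸ hsub (Or.inl hb)) (h.1.notMem_snd hp hb)
    · exact hlt
  · exact fun hlt => ⟨fun he => hlt.ne (congrArg Prod.fst he),
      Or.inr (Or.inr ⟨hlt, hp2.trans hq2.symm, hq2 ▸ hH.ne_empty⟩)⟩

theorem fst_inter_eq_empty (h : OneNestedCompatible 𝒮) (hH : H.Nonempty) (hp : p ∈ 𝒮)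
    (hq : q ∈ 𝒮) (hp2 : p.2 = H) (hq2 : q.2 = H) (hpq : ¬ p.1 ⊆ q.1)
    (hqp : ¬ q.1 ⊆ p.1) :
    p.1 ∩ q.1 = ∅ := by
  have hne : p ≠ q := by rintro rfl; exact hpq subset_rfl
  rcases h.splt_or_splt_or_disjoint hp hq hne with hc | hc | hc | hc
  · exact absurd ((h.splt_iff_ssubset hH hp hq hp2 hq2).mp hc).subset hpq
  · exact absurd ((h.splt_iff_ssubset hH hq hp hq2 hp2).mp hc).subset hqp
  · obtain ⟨a, ha⟩ := hH
    exact absurd hc (Set.nonempty_iff_ne_empty.mp ⟨a, Or.inr (hp2 ▸ ha), Or.inr (hq2 ▸ ha)⟩)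
  · exact hc.1

theorem comparable_trans (h : OneNestedCompatible 𝒮) (hH : H.Nonempty) (hp : p ∈ 𝒮)
    (hq : q ∈ 𝒮) (hr : r ∈ 𝒮) (hp2 : p.2 = H) (hq2 : q.2 = H) (hr2 : r.2 = H)
    (hpq : p.1 ⊆ q.1 ∨ q.1 ⊆ p.1) (hqr : q.1 ⊆ r.1 ∨ r.1 ⊆ q.1) :
    p.1 ⊆ r.1 ∨ r.1 ⊆ p.1 := by
  by_contra hpr
  obtain ⟨hpr, hrp⟩ := not_or.mp hpr
  have hd := h.fst_inter_eq_empty hH hp hr hp2 hr2 hpr hrp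
  rcases hpq with hpq | hqp <;> rcases hqr with hqr | hrq
  · exact hpr (hpq.trans hqr)
  · exact h.2.2.2.2.2 ⟨p, hp, r, hr, q, hq, hp2.trans hr2.symm, hr2.trans hq2.symm,
      hp2 ▸ hH.ne_empty, hd, Or.inl (Set.union_subset hpq hrq)⟩
  · obtain ⟨a, ha⟩ := h.1.fst_nonempty hq
    exact Set.eq_empty_iff_forall_notMem.mp hd a ⟨hqp ha, hqr ha⟩
  · exact hrp (hrq.trans hqp)

theorem chainThrough_comparable (h : OneNestedCompatible 𝒮) (hH : H.Nonempty)
    (hmem : (S, H) ∈ 𝒮) (hp : p ∈ chainThrough 𝒮 S H) (hq : q ∈ chainThrough 𝒮 S H) :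
    p.1 ⊆ q.1 ∨ q.1 ⊆ p.1 :=
  h.comparable_trans hH hp.1 hmem hq.1 hp.2.1 rfl hq.2.1 hp.2.2 hq.2.2.symm

theorem mem_chainThrough_of_comparable (h : OneNestedCompatible 𝒮) (hH : H.Nonempty)
    (hmem : (S, H) ∈ 𝒮) (hr : r ∈ 𝒮) (hr2 : r.2 = H) (hc : c ∈ chainThrough 𝒮 S H)
    (hrc : r.1 ⊆ c.1 ∨ c.1 ⊆ r.1) : r ∈ chainThrough 𝒮 S H :=
  ⟨hr, hr2, h.comparable_trans hH hr hc.1 hmem hr2 hc.2.1 rfl hrc hc.2.2⟩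

theorem isChain_insert_chainThrough (h : OneNestedCompatible 𝒮) (hH : H.Nonempty)
    (hmem : (S, H) ∈ 𝒮) : IsChain splt (insert (H, ∅) (chainThrough 𝒮 S H)) := by
  refine IsChain.insert (fun p hp q hq hne => ?_) fun b hb _ => Or.inl (splt_bot hH hb.2.1)
  have hfst : p.1 ≠ q.1 := fun he => hne (Prod.ext he (hp.2.1.trans hq.2.1.symm))
  rcases h.chainThrough_comparable hH hmem hp hq with hpq | hqp
  · exact Or.inl ((h.splt_iff_ssubset hH hp.1 hq.1 hp.2.1 hq.2.1).mpr (hpq.ssubset_of_ne hfst))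
  · exact Or.inr ((h.splt_iff_ssubset hH hq.1 hp.1 hq.2.1 hp.2.1).mpr
      (hqp.ssubset_of_ne hfst.symm))

theorem exists_max_chainThrough [Finite X] (h : OneNestedCompatible 𝒮) (hH : H.Nonempty)
    (hmem : (S, H) ∈ 𝒮) :
    ∃ c ∈ chainThrough 𝒮 S H, ∀ p ∈ chainThrough 𝒮 S H, p.1 ⊆ c.1 := by
  obtain ⟨c, hc, hmax⟩ := (Set.toFinite (chainThrough 𝒮 S H)).exists_maximalFor Prod.fst _
    ⟨_, mem_chainThrough_self hmem⟩
  refine ⟨c, hc, fun p hp => ?_⟩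
  rcases h.chainThrough_comparable hH hmem hp hc with hpc | hcp
  exacts [hpc, hmax hp hcp]

theorem mem_chainThrough_of_splt_of_splt (h : OneNestedCompatible 𝒮) (hH : H.Nonempty)
    (hmem : (S, H) ∈ 𝒮) {d : Set X × Set X}
    (hd : d ∈ insert (H, ∅) (chainThrough 𝒮 S H))
    (hc : c ∈ chainThrough 𝒮 S H) (hr : r ∈ 𝒮) (hdr : splt d r) (hrc : splt r c) :
    r ∈ chainThrough 𝒮 S H := by
  have hHr : H ⊂ r.1 ∪ r.2 := by
    rcases hd with rfl | hd
    · exact h.1.ssubset_union_of_splt_bot hr hdr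
    · obtain ⟨a, ha⟩ := h.1.fst_nonempty hd.1
      refine Set.ssubset_of_ssubset_of_subset ?_ hdr.union_subset
      rw [hd.2.1, Set.ssubset_iff_of_subset Set.subset_union_right]
      exact ⟨a, Or.inl ha, hd.2.1 ▸ h.1.notMem_snd hd.1 ha⟩
  obtain ⟨hr2, hrc⟩ := h.1.snd_eq_and_ssubset_of_splt hH hc.1 hc.2.1 hHr hrc
  exact h.mem_chainThrough_of_comparable hH hmem hr hr2 hc (Or.inl hrc.subset)

theorem splt_of_union_subset_fst (h : OneNestedCompatible 𝒮) (hH : H.Nonempty)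
    (hmem : (S, H) ∈ 𝒮) {a : Set X × Set X} (ha : a ∈ 𝒮) (ha2 : a.2 ≠ H)
    (haSH : S ∪ H ⊆ a.1) (hr : r ∈ 𝒮) (hr2 : r.2 = H) : splt r a := by
  obtain ⟨x, hx⟩ := hH
  have hne : r ≠ a := fun he => ha2 (he ▸ hr2)
  rcases h.splt_or_splt_or_disjoint hr ha hne with hc | ⟨-, hc | hc | hc⟩ | hc | hc
  · exact hc
  · exact absurd (hr2 ▸ hx) (h.1.notMem_snd hr (hc (Or.inl (haSH (Or.inr hx)))))
  · obtain ⟨y, hy⟩ := h.1.fst_nonempty hmem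
    exact absurd (hr2 ▸ hc (Or.inl (haSH (Or.inl hy)))) (h.1.notMem_snd hmem hy)
  · exact absurd (hc.2.1 ▸ hr2) ha2
  · exact absurd hc (Set.nonempty_iff_ne_empty.mp
      ⟨x, Or.inr (hr2 ▸ hx), Or.inl (haSH (Or.inr hx))⟩)
  · exact absurd (hc.2.1.symm.trans hr2) ha2

theorem forall_fst_subset_of_spcovers (h : OneNestedCompatible 𝒮) (hH : H.Nonempty)
    (hmem : (S, H) ∈ 𝒮) {a b : Set X × Set X} (hab : SPCovers 𝒮 a b)
    (hb : b ∈ chainThrough 𝒮 S H) (ha2 : a.2 ≠ H) (haSH : S ∪ H ⊆ a.1) :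
    ∀ r ∈ chainThrough 𝒮 S H, r.1 ⊆ b.1 := by
  intro r hr
  by_contra hrb
  have hbr : b.1 ⊂ r.1 := ⟨(h.chainThrough_comparable hH hmem hr hb).resolve_left hrb, hrb⟩
  exact hab.2.2.2 ⟨r, hr.1, (h.splt_iff_ssubset hH hb.1 hr.1 hb.2.1 hr.2.1).mpr hbr,
    h.splt_of_union_subset_fst hH hmem hab.1 ha2 haSH hr.1 hr.2.1⟩

theorem union_subset_of_spcovers_max (h : OneNestedCompatible 𝒮) (hH : H.Nonempty)
    (hmem : (S, H) ∈ 𝒮) (hc : c ∈ chainThrough 𝒮 S H)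
    (hcmax : ∀ p ∈ chainThrough 𝒮 S H, p.1 ⊆ c.1) (hq₀ : SPCovers 𝒮 q₀ c) :
    S ∪ H ⊆ q₀.1 ∧ q₀.2 ≠ H := by
  obtain ⟨hq₀𝒮, hc𝒮, ⟨-, hsub | hsub | hlt⟩, hno⟩ := hq₀
  · have hSH : S ∪ H ⊆ q₀.1 := Set.union_subset
      ((hcmax _ (mem_chainThrough_self hmem)).trans (Set.subset_union_left.trans hsub))
      (hc.2.1 ▸ Set.subset_union_right.trans hsub)
    obtain ⟨a, ha⟩ := hH
    exact ⟨hSH, fun hq₀2 => h.1.notMem_snd hq₀𝒮 (hSH (Or.inr ha)) (hq₀2 ▸ ha)⟩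
  · -- `(q₀.2, ∅)` would lie strictly between `c` and `q₀`
    obtain ⟨a, ha⟩ := h.1.fst_nonempty hc𝒮
    have hq₀2 : q₀.2 ≠ ∅ := Set.nonempty_iff_ne_empty.mp ⟨a, hsub (Or.inl ha)⟩
    refine (hno ⟨(q₀.2, ∅), h.2.2.2.1 q₀ hq₀𝒮 hq₀2, ⟨?_, Or.inl hsub⟩,
      ⟨?_, Or.inr (Or.inl (by simp))⟩⟩).elim
    · exact fun he => hH.ne_empty (hc.2.1 ▸ congrArg Prod.snd he)
    · exact fun he => hq₀2 (congrArg Prod.snd he).symm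
  · exact (hlt.1.not_subset (hcmax q₀ (h.mem_chainThrough_of_comparable hH hmem hq₀𝒮
      (hlt.2.1.symm.trans hc.2.1) hc (Or.inr hlt.1.subset)))).elim

theorem eq_of_spcovers_of_mem_fst (h : OneNestedCompatible 𝒮) {p' : Set X × Set X}
    (hp : SPCovers 𝒮 p c) (hp' : SPCovers 𝒮 p' c) {a : X} (ha : a ∈ p.1)
    (ha' : a ∈ p'.1) :
    p = p' := by
  by_contra hne
  rcases h.splt_or_splt_or_disjoint hp.1 hp'.1 hne with hc | hc | hc | hc
  · exact hp'.2.2.2 ⟨p, hp.1, hp.2.2.1, hc⟩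
  · exact hp.2.2.2 ⟨p', hp'.1, hp'.2.2.1, hc⟩
  · exact Set.eq_empty_iff_forall_notMem.mp hc a ⟨Or.inl ha, Or.inl ha'⟩
  · exact Set.eq_empty_iff_forall_notMem.mp hc.1 a ⟨ha, ha'⟩

theorem mem_chainThrough_of_isChain (h : OneNestedCompatible 𝒮) (hH : H.Nonempty)
    (hmem : (S, H) ∈ 𝒮) (hc : c ∈ chainThrough 𝒮 S H)
    (hl : (c :: l ++ [(H, ∅)]).IsChain (SPCovers 𝒮)) :
    ∀ p ∈ c :: l, p ∈ chainThrough 𝒮 S H := by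
  intro p hp
  rcases List.mem_cons.mp hp with rfl | hp
  · exact hc
  have hpw := h.1.pairwise_of_isChain_spcovers hl
  rw [List.cons_append, List.pairwise_cons, List.pairwise_append] at hpw
  obtain ⟨-, hp𝒮, hpc⟩ := hpw.1 p (List.mem_append_left _ hp)
  exact h.mem_chainThrough_of_splt_of_splt hH hmem (Set.mem_insert _ _) hc hp𝒮
    (hpw.2.2.2 p hp _ (List.mem_singleton_self _)).2.2 hpc

theorem isSPPath (h : OneNestedCompatible 𝒮) (hH : H.Nonempty) (hmem : (S, H) ∈ 𝒮)
    (hc : c ∈ chainThrough 𝒮 S H) (hcmax : ∀ p ∈ chainThrough 𝒮 S H, p.1 ⊆ c.1)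
    (hq₀ : SPCovers 𝒮 q₀ c) (hl : (c :: l ++ [(H, ∅)]).IsChain (SPCovers 𝒮)) :
    IsSPPath 𝒮 S H (q₀ :: c :: l ++ [(H, ∅)]) := by
  have hlC := h.mem_chainThrough_of_isChain hH hmem hc hl
  have hSH : (S, H) ∈ c :: l ++ [(H, ∅)] := by
    refine mem_of_isChain_spcovers (h.isChain_insert_chainThrough hH hmem) hmem
      (Or.inr (mem_chainThrough_self hmem)) hl (List.forall_mem_append_singleton _ hlC) ?_ ?_
    · rw [h.splt_iff_ssubset hH hc.1 hmem hc.2.1 rfl]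
      exact fun hlt => hlt.not_subset (hcmax _ (mem_chainThrough_self hmem))
    · exact h.1.splt_asymm (h.2.2.2.1 _ hmem hH.ne_empty) hmem (splt_bot hH rfl)
  have hSH : (S, H) ∈ c :: l := by
    simpa [hH.ne_empty] using hSH
  exact isSPPath_iff.mpr ⟨q₀, c :: l, rfl, hl.cons_cons hq₀, fun p hp => (hlC p hp).2.1, hSH,
    h.union_subset_of_spcovers_max hH hmem hc hcmax hq₀⟩

theorem mem_chainThrough_of_isChain_of_mem (h : OneNestedCompatible 𝒮) (hH : H.Nonempty)
    (hmem : (S, H) ∈ 𝒮) {a : Set X × Set X} {l' : List (Set X × Set X)}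
    (hch : (a :: l' ++ [(H, ∅)]).IsChain (SPCovers 𝒮)) (hl'H : ∀ p ∈ l', p.2 = H)
    (hSH : (S, H) ∈ l') : ∀ p ∈ l', p ∈ chainThrough 𝒮 S H := by
  have hpw : l'.Pairwise fun p q => p ∈ 𝒮 ∧ q ∈ 𝒮 ∧ splt q p :=
    (h.1.pairwise_of_isChain_spcovers hch).sublist ((List.sublist_append_left l' _).cons a)
  intro p hp
  by_cases hpSH : p = (S, H)
  · exact hpSH ▸ mem_chainThrough_self hmem
  rcases hpw.rel_or_rel hp hSH hpSH with ⟨hp𝒮, -, hlt⟩ | ⟨-, hp𝒮, hlt⟩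
  · refine h.mem_chainThrough_of_comparable hH hmem hp𝒮 (hl'H p hp)
      (mem_chainThrough_self hmem) (Or.inr ?_)
    exact ((h.splt_iff_ssubset hH hmem hp𝒮 rfl (hl'H p hp)).mp hlt).subset
  · refine h.mem_chainThrough_of_comparable hH hmem hp𝒮 (hl'H p hp)
      (mem_chainThrough_self hmem) (Or.inl ?_)
    exact ((h.splt_iff_ssubset hH hp𝒮 hmem (hl'H p hp) rfl).mp hlt).subset

theorem eq_of_isSPPath (h : OneNestedCompatible 𝒮) (hH : H.Nonempty) (hmem : (S, H) ∈ 𝒮)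
    (hc : c ∈ chainThrough 𝒮 S H) (hcmax : ∀ p ∈ chainThrough 𝒮 S H, p.1 ⊆ c.1)
    (hq₀ : SPCovers 𝒮 q₀ c) (hl : (c :: l ++ [(H, ∅)]).IsChain (SPCovers 𝒮))
    {L : List (Set X × Set X)} (hL : IsSPPath 𝒮 S H L) : L = q₀ :: c :: l ++ [(H, ∅)] := by
  obtain ⟨a, l', rfl, hch, hl'H, hSH, haSH, ha2⟩ := isSPPath_iff.mp hL
  have hl'C := h.mem_chainThrough_of_isChain_of_mem hH hmem hch hl'H hSH
  obtain ⟨b, l₁, rfl⟩ := List.exists_cons_of_ne_nil (List.ne_nil_of_mem hSH)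
  obtain ⟨hab, hbl⟩ := List.isChain_cons_cons.mp hch
  have hb := hl'C b List.mem_cons_self
  have hbmax := h.forall_fst_subset_of_spcovers hH hmem hab hb ha2 haSH
  obtain rfl : b = c := Prod.ext ((hcmax b hb).antisymm (hbmax c hc)) (hb.2.1.trans hc.2.1.symm)
  obtain rfl : a = q₀ := h.eq_of_spcovers_of_mem_fst hab hq₀ (haSH (Or.inr hH.some_mem))
    ((h.union_subset_of_spcovers_max hH hmem hc hcmax hq₀).1 (Or.inr hH.some_mem))
  rw [h.1.eq_of_isChain_spcovers (h.isChain_insert_chainThrough hH hmem) hbl hl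
    (List.forall_mem_append_singleton _ hl'C)
    (List.forall_mem_append_singleton _ (h.mem_chainThrough_of_isChain hH hmem hc hl))]

end OneNestedCompatible

theorem unique_path_exists_general {X : Type*} [Fintype X]
    (𝒮 : Set (Set X × Set X)) (h : OneNestedCompatible 𝒮)
    (S H : Set X) (hmem : ((S, H) : Set X × Set X) ∈ 𝒮) (hH : H ≠ ∅) :
    ∃! L : List (Set X × Set X), IsSPPath 𝒮 S H L := by
  have hH' : H.Nonempty := Set.nonempty_iff_ne_empty.mpr hH
  obtain ⟨c, hc, hcmax⟩ := h.exists_max_chainThrough hH' hmem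
  have hbot : (H, ∅) ∈ 𝒮 := h.2.2.2.1 _ hmem hH
  obtain ⟨l, hl⟩ := h.1.exists_isChain_spcovers hc.1 hbot (splt_bot hH' hc.2.1)
  have hc_lt_univ : splt c (Set.univ, ∅) :=
    ⟨fun he => hH (hc.2.1.symm.trans (congrArg Prod.snd he)), Or.inl (Set.subset_univ _)⟩
  obtain ⟨q₀, hq₀⟩ := h.1.exists_spcovers h.2.1 hc.1 hc_lt_univ
  exact ⟨_, h.isSPPath hH' hmem hc hcmax hq₀ hl,
    fun L hL => h.eq_of_isSPPath hH' hmem hc hcmax hq₀ hl hL⟩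

/-- If `𝒮` is 1-nested compatible and `(S,H) ∈ 𝒮` with `H ≠ ∅`, then there is a
unique finite sequence `(q₀,…,q_m)` of elements of `𝒮` with `m ≥ 2` such that `q_j` covers
`q_{j+1}` for all `0 ≤ j < m`, `q_m = (H,∅)`, every interior `q_j` has second component `H`,
`q_i = (S,H)` for some `1 ≤ i ≤ m−1`, and `q₀ = (S₊,H₊)` satisfies `S ∪ H ⊆ S₊` and `H₊ ≠ H`. -/
theorem unique_path_exists {X : Type*} [Fintype X] [Nonempty X]
    (𝒮 : Set (Set X × Set X)) (h : OneNestedCompatible 𝒮)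
    (S H : Set X) (hmem : ((S, H) : Set X × Set X) ∈ 𝒮) (hH : H ≠ ∅) :
    ∃! L : List (Set X × Set X), IsSPPath 𝒮 S H L :=
  unique_path_exists_general 𝒮 h S H hmem hH
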